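/- Let R ∈ SO(3) and let Σ = (𝒫_α μ̃_τ + 𝒬_α μ̃_n) ⊗ D_α (sum over α = 1,2), where the tensors 𝒫_α, 𝒬_α are defined via the rotated frame d_i = R D_i as 𝒫₁ = d₂⊗d₃ - 2 d₃⊗d₂, 𝒫₂ = -d₁⊗d₃ + 2 d₃⊗d₁, 𝒬₁ = d₁⊗d₁ + d₂⊗d₃, 𝒬₂ = d₂⊗d₂ + d₁⊗d₃. Then axl applied to the skew part of Σ Rᵀ recovers μ̃_τ whenever μ̃_n = Σⱼ μ_{n,j} dⱼ gives a symmetric contribution; specifically axl(skew(Σ Rᵀ)) = μ̃_τ when μ̃_τ = Σⱼ μ_{τ,j} dⱼ and μ̃_n satisfies the symmetry of [μ̃_n]_s. -/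
import Mathlib


open Matrix

/-- The axial vector of a 3×3 matrix, `axl(A)ᵢ = -(1/2) εᵢⱼₖ Aⱼₖ`. -/
noncomputable def axl (A : Matrix (Fin 3) (Fin 3) ℝ) : Fin 3 → ℝ :=
  ![(A 2 1 - A 1 2) / 2, (A 0 2 - A 2 0) / 2, (A 1 0 - A 0 1) / 2]

/-- The skew-symmetric part of a matrix. -/
noncomputable def skewPart (A : Matrix (Fin 3) (Fin 3) ℝ) : Matrix (Fin 3) (Fin 3) ℝ :=
  ((1 : ℝ) / 2) • (A - Aᵀ)

/-- The standard basis vector `Dᵢ` of ℝ³. -/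
noncomputable def sb (i : Fin 3) : Fin 3 → ℝ := fun j => if j = i then 1 else 0

set_option maxHeartbeats 2000000 in
/-- with Σ = (𝒫_α μ̃_τ + 𝒬_α μ̃_n) ⊗ D_α (α = 1,2), built from the rotated
frame d_i = R D_i with R ∈ SO(3), and μ̃_τ = Σ μ_{τ,j} dⱼ, μ̃_n = Σ μ_{n,j} dⱼ,
one has axl(skew(Σ Rᵀ)) = μ̃_τ. -/
theorem axl_skew_sigma_eq_mu_tau
    (R : Matrix (Fin 3) (Fin 3) ℝ)
    (hR : Rᵀ * R = 1) (hR' : R * Rᵀ = 1) (hdet : R.det = 1)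
    (τ1 τ2 τ3 ν1 ν2 ν3 : ℝ) :
    let d : Fin 3 → Fin 3 → ℝ := fun i => R *ᵥ sb i
    let μτ : Fin 3 → ℝ := τ1 • d 0 + τ2 • d 1 + τ3 • d 2
    let μn : Fin 3 → ℝ := ν1 • d 0 + ν2 • d 1 + ν3 • d 2
    let P1 := vecMulVec (d 1) (d 2) - (2 : ℝ) • vecMulVec (d 2) (d 1)
    let P2 := -vecMulVec (d 0) (d 2) + (2 : ℝ) • vecMulVec (d 2) (d 0)
    let Q1 := vecMulVec (d 0) (d 0) + vecMulVec (d 1) (d 2)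
    let Q2 := vecMulVec (d 1) (d 1) + vecMulVec (d 0) (d 2)
    let Sig := vecMulVec (P1 *ᵥ μτ + Q1 *ᵥ μn) (sb 0)
             + vecMulVec (P2 *ᵥ μτ + Q2 *ᵥ μn) (sb 1)
    axl (skewPart (Sig * Rᵀ)) = μτ := by
  have h := Matrix.mul_adjugate R
  rw [hdet, one_smul] at h
  have hadj : R.adjugate = Rᵀ := by
    calc R.adjugate = (Rᵀ * R) * R.adjugate := by rw [hR, one_mul]
      _ = Rᵀ * (R * R.adjugate) := by rw [Matrix.mul_assoc]
      _ = Rᵀ := by rw [h, mul_one]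
  rw [Matrix.adjugate_fin_three] at hadj
  have e00 := congrFun (congrFun hadj 0) 0
  have e01 := congrFun (congrFun hadj 0) 1
  have e02 := congrFun (congrFun hadj 0) 2
  have e10 := congrFun (congrFun hadj 1) 0
  have e11 := congrFun (congrFun hadj 1) 1
  have e12 := congrFun (congrFun hadj 1) 2
  have e20 := congrFun (congrFun hadj 2) 0
  have e21 := congrFun (congrFun hadj 2) 1
  have e22 := congrFun (congrFun hadj 2) 2
  simp at e00 e01 e02 e10 e11 e12 e20 e21 e22
  have g00 := congrFun (congrFun hR 0) 0
  have g01 := congrFun (congrFun hR 0) 1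
  have g02 := congrFun (congrFun hR 0) 2
  have g10 := congrFun (congrFun hR 1) 0
  have g11 := congrFun (congrFun hR 1) 1
  have g12 := congrFun (congrFun hR 1) 2
  have g20 := congrFun (congrFun hR 2) 0
  have g21 := congrFun (congrFun hR 2) 1
  have g22 := congrFun (congrFun hR 2) 2
  simp [Matrix.mul_apply, Fin.sum_univ_succ, Matrix.one_apply] at g00 g01 g02 g10 g11 g12 g20 g21 g22
  intro d μτ μn P1 P2 Q1 Q2 Sig
  funext i
  fin_cases i <;>
    simp [Sig, P1, P2, Q1, Q2, μτ, μn, d, axl, skewPart, Matrix.mul_apply,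
      Matrix.vecMulVec_apply, Matrix.mulVec, dotProduct, sb,
      Fin.sum_univ_succ, Matrix.transpose_apply]
  · linear_combination
      (τ1*(R 0 0*R 0 2+R 1 0*R 1 2+R 2 0*R 2 2)
        + τ2*(R 0 1*R 0 2+R 1 1*R 1 2+R 2 1*R 2 2)
        + τ3*(R 0 2*R 0 2+R 1 2*R 1 2+R 2 2*R 2 2)) * e20
      + (τ1*(R 0 0*R 0 1+R 1 0*R 1 1+R 2 0*R 2 1)
        + τ2*(R 0 1*R 0 1+R 1 1*R 1 1+R 2 1*R 2 1)
        + τ3*(R 0 1*R 0 2+R 1 1*R 1 2+R 2 1*R 2 2)) * e10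
      + (τ1*(R 0 0*R 0 0+R 1 0*R 1 0+R 2 0*R 2 0)
        + τ2*(R 0 0*R 0 1+R 1 0*R 1 1+R 2 0*R 2 1)
        + τ3*(R 0 0*R 0 2+R 1 0*R 1 2+R 2 0*R 2 2)) * e00
      + R 0 2 * (τ1*g02 + τ2*g12 + τ3*g22)
      + R 0 1 * (τ1*g01 + τ2*g11 + τ3*g21)
      + R 0 0 * (τ1*g00 + τ2*g10 + τ3*g20)
  · linear_combination
      (τ1*(R 0 0*R 0 2+R 1 0*R 1 2+R 2 0*R 2 2)
        + τ2*(R 0 1*R 0 2+R 1 1*R 1 2+R 2 1*R 2 2)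
        + τ3*(R 0 2*R 0 2+R 1 2*R 1 2+R 2 2*R 2 2)) * e21
      + (τ1*(R 0 0*R 0 1+R 1 0*R 1 1+R 2 0*R 2 1)
        + τ2*(R 0 1*R 0 1+R 1 1*R 1 1+R 2 1*R 2 1)
        + τ3*(R 0 1*R 0 2+R 1 1*R 1 2+R 2 1*R 2 2)) * e11
      + (τ1*(R 0 0*R 0 0+R 1 0*R 1 0+R 2 0*R 2 0)
        + τ2*(R 0 0*R 0 1+R 1 0*R 1 1+R 2 0*R 2 1)
        + τ3*(R 0 0*R 0 2+R 1 0*R 1 2+R 2 0*R 2 2)) * e01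
      + R 1 2 * (τ1*g02 + τ2*g12 + τ3*g22)
      + R 1 1 * (τ1*g01 + τ2*g11 + τ3*g21)
      + R 1 0 * (τ1*g00 + τ2*g10 + τ3*g20)
  · linear_combination
      (τ1*(R 0 0*R 0 2+R 1 0*R 1 2+R 2 0*R 2 2)
        + τ2*(R 0 1*R 0 2+R 1 1*R 1 2+R 2 1*R 2 2)
        + τ3*(R 0 2*R 0 2+R 1 2*R 1 2+R 2 2*R 2 2)) * e22
      + (τ1*(R 0 0*R 0 1+R 1 0*R 1 1+R 2 0*R 2 1)
        + τ2*(R 0 1*R 0 1+R 1 1*R 1 1+R 2 1*R 2 1)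
        + τ3*(R 0 1*R 0 2+R 1 1*R 1 2+R 2 1*R 2 2)) * e12
      + (τ1*(R 0 0*R 0 0+R 1 0*R 1 0+R 2 0*R 2 0)
        + τ2*(R 0 0*R 0 1+R 1 0*R 1 1+R 2 0*R 2 1)
        + τ3*(R 0 0*R 0 2+R 1 0*R 1 2+R 2 0*R 2 2)) * e02
      + R 2 2 * (τ1*g02 + τ2*g12 + τ3*g22)
      + R 2 1 * (τ1*g01 + τ2*g11 + τ3*g21)
      + R 2 0 * (τ1*g00 + τ2*g10 + τ3*g20)
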